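/- Let A ∈ ℂ^{m×N} and q ≥ 1, and suppose A satisfies the ℓ^q-robust null space property of order s with constants 0 < ρ < 1 and τ > 0 relative to the rescaled norm s^(1/q−1/2)‖·‖ on ℂ^m. Then the simultaneous quotient satisfies Q_s(A)_{q,1} ≤ (ρ + 2) Q_s(A)_1 + τ, where the quotients are relative to ‖·‖. -/

import Mathlib

/-!
Fix `e ≠ 0` and `z` with `A z = e`. The set `S` of coordinates with `‖z i‖ > ‖z‖₁ / s` has at
most `s` elements, and the tail obeys Stechkin's bound `‖z_{S̄}‖_q ≤ s^(1/q - 1) ‖z‖₁`. Adding the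
null space property on `S` gives `s^(1/2 - 1/q) ‖z‖_q ≤ (ρ + 1) s^(-1/2) ‖z‖₁ + τ ‖e‖`, so the
simultaneous quotient term of `z` is at most `ρ + 2` times its `ℓ¹`-quotient term plus `τ`.
Taking the infimum over `z` and then the supremum over `e` gives the claim.
-/

open scoped ENNReal

noncomputable def lpNorm {n : ℕ} (p : ℝ) (x : Fin n → ℂ) : ℝ :=
  (∑ i, ‖x i‖ ^ p) ^ (1 / p)

/-- Restriction of `z` to the coordinates in `S` (zero elsewhere). -/
def restrictTo {n : ℕ} (S : Finset (Fin n)) (z : Fin n → ℂ) : Fin n → ℂ :=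
  fun i => if i ∈ S then z i else 0

/-- `A` satisfies the `ℓ^q`-robust null space property of order `s` with constants
`ρ, τ` relative to the norm `nu` on `ℂ^m`. -/
def RNSP {m N : ℕ} (A : Matrix (Fin m) (Fin N) ℂ) (nu : (Fin m → ℂ) → ℝ)
    (q : ℝ) (s : ℕ) (ρ τ : ℝ) : Prop :=
  ∀ S : Finset (Fin N), S.card ≤ s → ∀ z : Fin N → ℂ,
    lpNorm q (restrictTo S z) ≤
      (s : ℝ) ^ (1 / q - 1) * ρ * lpNorm 1 (restrictTo Sᶜ z) + τ * nu (A.mulVec z)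

/-- `ℓ^1`-quotient of order `s` (threshold 0) of `A`, relative to `nn`. -/
noncomputable def quotL1 {m N : ℕ} (A : Matrix (Fin m) (Fin N) ℂ)
    (nn : (Fin m → ℂ) → ℝ) (s : ℕ) : ℝ≥0∞ :=
  ⨆ e ∈ {e : Fin m → ℂ | e ≠ 0},
    ⨅ z ∈ {z : Fin N → ℂ | A.mulVec z = e},
      ENNReal.ofReal (lpNorm 1 z / ((s : ℝ) ^ ((1 : ℝ) / 2) * nn e))

/-- Simultaneous `(ℓ^q, ℓ^1)`-quotient of order `s` of `A`, relative to `nn`. -/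
noncomputable def quotSimul {m N : ℕ} (A : Matrix (Fin m) (Fin N) ℂ)
    (nn : (Fin m → ℂ) → ℝ) (q : ℝ) (s : ℕ) : ℝ≥0∞ :=
  ⨆ e ∈ {e : Fin m → ℂ | e ≠ 0},
    ⨅ z ∈ {z : Fin N → ℂ | A.mulVec z = e},
      ENNReal.ofReal
        (((s : ℝ) ^ ((1 : ℝ) / 2 - 1 / q) * lpNorm q z
            + (s : ℝ) ^ (-(1 : ℝ) / 2) * lpNorm 1 z) / nn e)

open Finset

section LpNorm

variable {n : ℕ}

lemma lpNorm_nonneg (p : ℝ) (x : Fin n → ℂ) : 0 ≤ lpNorm p x := by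
  unfold lpNorm; positivity

lemma lpNorm_one (x : Fin n → ℂ) : lpNorm 1 x = ∑ i, ‖x i‖ := by
  simp [lpNorm]

lemma norm_le_lpNorm_one (z : Fin n → ℂ) (i : Fin n) : ‖z i‖ ≤ lpNorm 1 z := by
  rw [lpNorm_one]
  exact single_le_sum (fun j _ => norm_nonneg (z j)) (mem_univ i)

lemma lpNorm_eq_norm_toLp {p : ℝ} (hp : 0 < p) (x : Fin n → ℂ) :
    lpNorm p x = ‖WithLp.toLp (ENNReal.ofReal p) x‖ := by
  rw [PiLp.norm_eq_sum (by rwa [ENNReal.toReal_ofReal hp.le])]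
  simp [lpNorm, ENNReal.toReal_ofReal hp.le]

lemma lpNorm_add_le {p : ℝ} (hp : 1 ≤ p) (x y : Fin n → ℂ) :
    lpNorm p (x + y) ≤ lpNorm p x + lpNorm p y := by
  have hp0 : 0 < p := by linarith
  have : Fact (1 ≤ ENNReal.ofReal p) := ⟨by simpa using hp⟩
  simp only [lpNorm_eq_norm_toLp hp0, WithLp.toLp_add]
  exact norm_add_le _ _

lemma restrictTo_add_restrictTo_compl (S : Finset (Fin n)) (z : Fin n → ℂ) :
    restrictTo S z + restrictTo Sᶜ z = z := by
  funext i
  by_cases h : i ∈ S <;> simp [restrictTo, h]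

lemma lpNorm_one_restrictTo_le (S : Finset (Fin n)) (z : Fin n → ℂ) :
    lpNorm 1 (restrictTo S z) ≤ lpNorm 1 z := by
  simp only [lpNorm_one]
  refine sum_le_sum fun i _ => ?_
  by_cases h : i ∈ S <;> simp [restrictTo, h]

lemma lpNorm_le_of_norm_le {p M : ℝ} (hp : 1 ≤ p) (hM0 : 0 ≤ M) (x : Fin n → ℂ)
    (hM : ∀ i, ‖x i‖ ≤ M) :
    lpNorm p x ≤ M ^ (1 - 1 / p) * lpNorm 1 x ^ (1 / p) := by
  have hp0 : 0 < p := by linarith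
  have hsum : ∑ i, ‖x i‖ ^ p ≤ M ^ (p - 1) * ∑ i, ‖x i‖ := by
    rw [mul_sum]
    refine sum_le_sum fun i _ => ?_
    calc ‖x i‖ ^ p = ‖x i‖ ^ (p - 1) * ‖x i‖ := by
          rw [← Real.rpow_add_one' (norm_nonneg _) (by simp [hp0.ne']), sub_add_cancel]
      _ ≤ M ^ (p - 1) * ‖x i‖ := by gcongr; exact hM i
  calc lpNorm p x ≤ (M ^ (p - 1) * ∑ i, ‖x i‖) ^ (1 / p) := by
        unfold lpNorm; gcongr
    _ = M ^ (1 - 1 / p) * lpNorm 1 x ^ (1 / p) := by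
        rw [Real.mul_rpow (by positivity) (by positivity), ← Real.rpow_mul hM0, lpNorm_one]
        congr 2
        field_simp

end LpNorm

lemma card_filter_lpNorm_one_div_lt_norm_le {n s : ℕ} (hs : 1 ≤ s) (z : Fin n → ℂ) :
    (univ.filter fun i => lpNorm 1 z / s < ‖z i‖).card ≤ s := by
  set T := lpNorm 1 z
  set S := univ.filter fun i => T / s < ‖z i‖
  have hT0 : 0 ≤ T := lpNorm_nonneg 1 z
  rcases hT0.eq_or_lt with hT | hT
  · have : S = ∅ := filter_false_of_mem fun i _ => by
      rw [← hT, zero_div, not_lt, hT]; exact norm_le_lpNorm_one z i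
    simp [this]
  · have hcard : (S.card : ℝ) * (T / s) ≤ T := by
      calc (S.card : ℝ) * (T / s) = S.card • (T / s) := (nsmul_eq_mul _ _).symm
        _ ≤ ∑ i ∈ S, ‖z i‖ := card_nsmul_le_sum _ _ _ fun i hi => (mem_filter.1 hi).2.le
        _ ≤ ∑ i, ‖z i‖ :=
          sum_le_sum_of_subset_of_nonneg (subset_univ S) fun _ _ _ => norm_nonneg _
        _ = T := (lpNorm_one z).symm
    rw [mul_div_assoc', div_le_iff₀ (by exact_mod_cast hs), mul_comm T] at hcard
    exact_mod_cast le_of_mul_le_mul_right hcard hT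

/-- Stechkin's estimate. -/
lemma exists_card_le_lpNorm_restrictTo_compl_le {n : ℕ} {q : ℝ} (hq : 1 ≤ q) {s : ℕ}
    (hs : 1 ≤ s) (z : Fin n → ℂ) :
    ∃ S : Finset (Fin n), S.card ≤ s ∧
      lpNorm q (restrictTo Sᶜ z) ≤ (s : ℝ) ^ (1 / q - 1) * lpNorm 1 z := by
  have hs0 : (0 : ℝ) < s := by exact_mod_cast hs
  set T := lpNorm 1 z
  have hT0 : 0 ≤ T := lpNorm_nonneg 1 z
  set S := univ.filter fun i => T / s < ‖z i‖
  refine ⟨S, card_filter_lpNorm_one_div_lt_norm_le hs z, ?_⟩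
  have htail : ∀ i, ‖restrictTo Sᶜ z i‖ ≤ T / s := fun i => by
    by_cases hi : i ∈ Sᶜ
    · simp only [restrictTo, hi, if_true]
      simpa [S] using hi
    · simp only [restrictTo, hi, if_false, norm_zero]; positivity
  calc lpNorm q (restrictTo Sᶜ z)
      ≤ (T / s) ^ (1 - 1 / q) * lpNorm 1 (restrictTo Sᶜ z) ^ (1 / q) :=
        lpNorm_le_of_norm_le hq (by positivity) _ htail
    _ ≤ (T / s) ^ (1 - 1 / q) * T ^ (1 / q) := by
        gcongr
        · exact lpNorm_nonneg 1 _
        · exact lpNorm_one_restrictTo_le _ _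
    _ = (s : ℝ) ^ (1 / q - 1) * T := by
        rw [Real.div_rpow hT0 hs0.le, div_mul_eq_mul_div, ← Real.rpow_add' hT0 (by simp),
          sub_add_cancel, Real.rpow_one, div_eq_mul_inv, ← Real.rpow_neg hs0.le, neg_sub]
        ring

lemma RNSP.lpNorm_le {m N : ℕ} {A : Matrix (Fin m) (Fin N) ℂ} {nu : (Fin m → ℂ) → ℝ}
    {q : ℝ} {s : ℕ} {ρ τ : ℝ} (hNSP : RNSP A nu q s ρ τ) (hq : 1 ≤ q) (hs : 1 ≤ s)
    (hρ : 0 ≤ ρ) (z : Fin N → ℂ) :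
    lpNorm q z ≤ (s : ℝ) ^ (1 / q - 1) * (ρ + 1) * lpNorm 1 z + τ * nu (A.mulVec z) := by
  obtain ⟨S, hS, htail⟩ := exists_card_le_lpNorm_restrictTo_compl_le hq hs z
  have hhead := hNSP S hS z
  have hρ' : (s : ℝ) ^ (1 / q - 1) * ρ * lpNorm 1 (restrictTo Sᶜ z)
      ≤ (s : ℝ) ^ (1 / q - 1) * ρ * lpNorm 1 z := by
    gcongr; exact lpNorm_one_restrictTo_le _ _
  calc lpNorm q z = lpNorm q (restrictTo S z + restrictTo Sᶜ z) := by
        rw [restrictTo_add_restrictTo_compl]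
    _ ≤ lpNorm q (restrictTo S z) + lpNorm q (restrictTo Sᶜ z) := lpNorm_add_le hq _ _
    _ ≤ _ := by linarith

lemma RNSP.simultaneous_le {m N : ℕ} {A : Matrix (Fin m) (Fin N) ℂ}
    {nn : (Fin m → ℂ) → ℝ} {q : ℝ} {s : ℕ} {ρ τ : ℝ}
    (hNSP : RNSP A (fun v => (s : ℝ) ^ ((1 : ℝ) / q - 1 / 2) * nn v) q s ρ τ)
    (hq : 1 ≤ q) (hs : 1 ≤ s) (hρ : 0 ≤ ρ) (z : Fin N → ℂ) (hz : 0 < nn (A.mulVec z)) :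
    ((s : ℝ) ^ ((1 : ℝ) / 2 - 1 / q) * lpNorm q z
        + (s : ℝ) ^ (-(1 : ℝ) / 2) * lpNorm 1 z) / nn (A.mulVec z)
      ≤ (ρ + 2) * (lpNorm 1 z / ((s : ℝ) ^ ((1 : ℝ) / 2) * nn (A.mulVec z))) + τ := by
  have hs0 : (0 : ℝ) < s := by exact_mod_cast hs
  set c := (s : ℝ) ^ ((1 : ℝ) / 2 - 1 / q)
  set b := (s : ℝ) ^ ((1 : ℝ) / 2)
  have hb : (s : ℝ) ^ (-(1 : ℝ) / 2) = b⁻¹ := by rw [neg_div, Real.rpow_neg hs0.le]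
  have hc₁ : c * (s : ℝ) ^ (1 / q - 1) = b⁻¹ := by
    rw [← hb, ← Real.rpow_add hs0]; ring_nf
  have hc₂ : c * (s : ℝ) ^ ((1 : ℝ) / q - 1 / 2) = 1 := by
    rw [← Real.rpow_add hs0, sub_add_sub_cancel', sub_self, Real.rpow_zero]
  have hq_bound : c * lpNorm q z ≤ b⁻¹ * (ρ + 1) * lpNorm 1 z + τ * nn (A.mulVec z) := by
    calc c * lpNorm q z
        ≤ c * ((s : ℝ) ^ (1 / q - 1) * (ρ + 1) * lpNorm 1 z
            + τ * ((s : ℝ) ^ ((1 : ℝ) / q - 1 / 2) * nn (A.mulVec z))) :=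
          mul_le_mul_of_nonneg_left (hNSP.lpNorm_le hq hs hρ z) (by positivity)
      _ = b⁻¹ * (ρ + 1) * lpNorm 1 z + τ * nn (A.mulVec z) := by
          linear_combination ((ρ + 1) * lpNorm 1 z) * hc₁ + (τ * nn (A.mulVec z)) * hc₂
  rw [div_le_iff₀ hz, hb, add_mul,
    show (ρ + 2) * (lpNorm 1 z / (b * nn (A.mulVec z))) * nn (A.mulVec z)
      = b⁻¹ * (ρ + 1) * lpNorm 1 z + b⁻¹ * lpNorm 1 z by field_simp; ring]
  linarith

lemma ENNReal.iSup₂_iInf₂_le_mul_add {α β : Type*} {E : Set α} {Z : α → Set β}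
    {F G : α → β → ℝ≥0∞} {c t : ℝ≥0∞} (hc₀ : c ≠ 0) (hc : c ≠ ∞)
    (h : ∀ e ∈ E, ∀ z ∈ Z e, F e z ≤ c * G e z + t) :
    ⨆ e ∈ E, ⨅ z ∈ Z e, F e z ≤ c * (⨆ e ∈ E, ⨅ z ∈ Z e, G e z) + t := by
  refine iSup₂_le fun e he => ?_
  calc ⨅ z ∈ Z e, F e z ≤ ⨅ z ∈ Z e, (c * G e z + t) := iInf₂_mono (h e he)
    _ = c * (⨅ z ∈ Z e, G e z) + t := by
        simp_rw [ENNReal.mul_iInf_of_ne hc₀ hc, ENNReal.iInf_add]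
    _ ≤ c * (⨆ e ∈ E, ⨅ z ∈ Z e, G e z) + t := by
        gcongr; exact le_iSup₂ (f := fun e _ => ⨅ z ∈ Z e, G e z) e he

theorem stmt3_general {m N : ℕ} (A : Matrix (Fin m) (Fin N) ℂ)
    (nn : (Fin m → ℂ) → ℝ)
    (nn_add : ∀ x y, nn (x + y) ≤ nn x + nn y)
    (nn_smul : ∀ (c : ℂ) x, nn (c • x) = ‖c‖ * nn x)
    (nn_eq_zero : ∀ x, nn x = 0 ↔ x = 0)
    (q : ℝ) (hq : 1 ≤ q) (s : ℕ) (hs : 1 ≤ s)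
    (ρ τ : ℝ) (hρ0 : 0 < ρ)
    (hNSP : RNSP A (fun v => (s : ℝ) ^ ((1 : ℝ) / q - 1 / 2) * nn v) q s ρ τ) :
    quotSimul A nn q s ≤ ENNReal.ofReal (ρ + 2) * quotL1 A nn s + ENNReal.ofReal τ := by
  have hnn_pos : ∀ e, e ≠ 0 → 0 < nn e := fun e he =>
    (apply_nonneg (Seminorm.of nn nn_add nn_smul) e).lt_of_ne' (mt (nn_eq_zero e).1 he)
  refine ENNReal.iSup₂_iInf₂_le_mul_add (ENNReal.ofReal_pos.2 (by linarith)).ne'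
    ENNReal.ofReal_ne_top ?_
  rintro e he z rfl
  calc _ ≤ ENNReal.ofReal
          ((ρ + 2) * (lpNorm 1 z / ((s : ℝ) ^ ((1 : ℝ) / 2) * nn (A.mulVec z))) + τ) :=
        ENNReal.ofReal_le_ofReal (hNSP.simultaneous_le hq hs hρ0.le z (hnn_pos _ he))
    _ ≤ _ := ENNReal.ofReal_add_le
    _ = _ := by rw [ENNReal.ofReal_mul (by linarith)]

/-- Under the `ℓ^q`-robust null space property relative to the rescaled norm
`s^(1/q - 1/2) ‖·‖`, the simultaneous quotient is controlled by the `ℓ^1`-quotient: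
`Q_s(A)_{q,1} ≤ (ρ + 2) Q_s(A)_1 + τ`. -/
theorem stmt3 {m N : ℕ} (A : Matrix (Fin m) (Fin N) ℂ)
    (nn : (Fin m → ℂ) → ℝ)
    (nn_add : ∀ x y, nn (x + y) ≤ nn x + nn y)
    (nn_smul : ∀ (c : ℂ) x, nn (c • x) = ‖c‖ * nn x)
    (nn_eq_zero : ∀ x, nn x = 0 ↔ x = 0)
    (q : ℝ) (hq : 1 ≤ q) (s : ℕ) (hs : 1 ≤ s)
    (ρ τ : ℝ) (hρ0 : 0 < ρ) (hρ1 : ρ < 1) (hτ : 0 < τ)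
    (hNSP : RNSP A (fun v => (s : ℝ) ^ ((1 : ℝ) / q - 1 / 2) * nn v) q s ρ τ) :
    quotSimul A nn q s ≤ ENNReal.ofReal (ρ + 2) * quotL1 A nn s + ENNReal.ofReal τ :=
  stmt3_general A nn nn_add nn_smul nn_eq_zero q hq s hs ρ τ hρ0 hNSP
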